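/- The monodromy filtration is the unique finite increasing filtration of M by submodules with its two characterizing properties. Precisely: let W : ℤ → (submodules of M) be a monotone family such that W_a = 0 for all sufficiently small a and W_a = M for all sufficiently large a, such that N(W_a) ⊆ W_{a−2} for every integer a, and such that for every integer a ≥ 0 the map W_a/W_{a−1} → W_{−a}/W_{−a−1} induced by N^a (which is well defined since N^a(W_a) ⊆ W_{−a} and N^a(W_{a−1}) ⊆ W_{−a−1}) is an isomorphism. Then W_a = fil^M_a M for every integer a. -/

import Mathlib

/-- `fil_a M = ker(N^{a+1})` for `a ≥ −1`, and `fil_a M = 0` for `a < −1`. -/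
noncomputable def filKer {R M : Type*} [CommRing R] [AddCommGroup M] [Module R M]
    (N : M →ₗ[R] M) (a : ℤ) : Submodule R M :=
  LinearMap.ker (N ^ (a + 1).toNat)

/-- `fil^a M = range(N^a)` for `a ≥ 0`, and `fil^a M = M` for `a < 0`. -/
noncomputable def filRange {R M : Type*} [CommRing R] [AddCommGroup M] [Module R M]
    (N : M →ₗ[R] M) (a : ℤ) : Submodule R M :=
  LinearMap.range (N ^ a.toNat)

/-- The monodromy filtration `fil^M_a M = Σ_{b−c=a} (fil_b M ∩ fil^c M)`. -/
noncomputable def filMonodromy {R M : Type*} [CommRing R] [AddCommGroup M] [Module R M]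
    (N : M →ₗ[R] M) (a : ℤ) : Submodule R M :=
  ⨆ (b : ℤ) (c : ℤ) (_ : b - c = a), filKer N b ⊓ filRange N c

/-!
Injectivity of `N^a` on `W_a/W_{a-1}`, together with `W` being exhaustive, forces
`ker N^{b+1} ⊆ W_b`; as `N` lowers `W` by two, every piece `ker N^{b+1} ∩ im N^c` then lies in
`W_{b-c}`. Conversely, surjectivity of `N^c` onto `W_{-c}/W_{-c-1}` and separatedness of `W`
write `W_{-c}` as a sum of the images `N^j W_j`, `j ≥ c`, so `W_{-c} ⊆ fil^M_{-c}` as soon as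
`W_j ⊆ fil^M_j` for `j ≥ c`. This drives a downward induction on `a`, starting where
`fil^M_a = M` because `N` is nilpotent: for `a ≥ 0` and `x ∈ W_a`, `N^{a+1} x` lies in
`W_{-a-2} ⊆ fil^M_{-a-2} = N^{a+1} fil^M_a`, and what is left lies in `ker N^{a+1} ⊆ fil^M_a`.
-/

namespace Submodule

variable {R M M₂ : Type*} [Ring R] [AddCommGroup M] [Module R M] [AddCommGroup M₂] [Module R M₂]
  {p p' : Submodule R M} {q q' : Submodule R M₂} {f : M →ₗ[R] M₂} {hf : ∀ x ∈ p, f x ∈ q}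
  {h : p'.comap p.subtype ≤ (q'.comap q.subtype).comap (f.restrict hf)}

theorem inf_comap_le_of_injective_mapQ_restrict
    (hinj : Function.Injective (mapQ (p'.comap p.subtype) (q'.comap q.subtype) (f.restrict hf) h)) :
    p ⊓ q'.comap f ≤ p' := by
  rintro x ⟨hx, hfx⟩
  have : mapQ _ _ (f.restrict hf) h (Quotient.mk ⟨x, hx⟩) = 0 := by
    simpa [Quotient.mk_eq_zero] using hfx
  simpa [Quotient.mk_eq_zero] using hinj (this.trans (map_zero _).symm)

theorem le_map_sup_of_surjective_mapQ_restrict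
    (hsurj : Function.Surjective
      (mapQ (p'.comap p.subtype) (q'.comap q.subtype) (f.restrict hf) h)) :
    q ≤ p.map f ⊔ q' := by
  intro y hy
  obtain ⟨u, hu⟩ := hsurj (Quotient.mk ⟨y, hy⟩)
  obtain ⟨⟨x, hx⟩, rfl⟩ := Quotient.mk_surjective _ u
  rw [mapQ_apply, Quotient.eq] at hu
  have hyx : y - f x ∈ q' := by simpa using q'.neg_mem hu
  rw [← add_sub_cancel (f x) y]
  exact add_mem_sup (mem_map_of_mem hx) hyx

end Submodule

section MonodromyFiltration

variable {R M : Type*} [CommRing R] [AddCommGroup M] [Module R M] (N : M →ₗ[R] M)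

theorem filKer_mono : Monotone (filKer N) :=
  fun _ _ h ↦ (LinearMap.iterateKer N).monotone (by omega)

theorem filKer_eq_bot {b : ℤ} (hb : b ≤ -1) : filKer N b = ⊥ := by
  rw [filKer, show (b + 1).toNat = 0 by omega, pow_zero]
  exact LinearMap.ker_id

theorem filRange_eq_top {c : ℤ} (hc : c ≤ 0) : filRange N c = ⊤ := by
  rw [filRange, show c.toNat = 0 by omega, pow_zero]
  exact LinearMap.range_id

theorem filKer_eq_top_of_pow_eq_zero {k : ℕ} (hk : N ^ k = 0) {b : ℤ} (hb : k ≤ b) :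
    filKer N b = ⊤ := by
  rw [filKer, show (b + 1).toNat = ((b + 1).toNat - k) + k by omega, pow_add, hk, mul_zero,
    LinearMap.ker_zero]

theorem pow_apply_mem_filKer {b : ℤ} {x : M} (hx : x ∈ filKer N b) (k : ℕ) :
    (N ^ k) x ∈ filKer N (b - k) := by
  have hx' : x ∈ LinearMap.ker (N ^ ((b - k + 1).toNat + k)) :=
    (LinearMap.iterateKer N).monotone (by omega) hx
  simpa [filKer, pow_add] using hx'

theorem pow_apply_mem_filRange {c : ℤ} {x : M} (hx : x ∈ filRange N c) (k : ℕ) :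
    (N ^ k) x ∈ filRange N (c + k) := by
  obtain ⟨y, rfl⟩ := hx
  have : (N ^ k) ((N ^ c.toNat) y) ∈ LinearMap.range (N ^ (c.toNat + k)) :=
    ⟨y, by rw [add_comm, pow_add, Module.End.mul_apply]⟩
  exact (LinearMap.iterateRange N).monotone (show (c + k).toNat ≤ c.toNat + k by omega) this

theorem filKer_inf_filRange_le_filMonodromy {a b c : ℤ} (h : b - c = a) :
    filKer N b ⊓ filRange N c ≤ filMonodromy N a :=
  le_iSup_of_le b <| le_iSup_of_le c <| le_iSup_of_le h le_rfl

theorem filKer_le_filMonodromy (a : ℤ) : filKer N a ≤ filMonodromy N a := by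
  simpa [filRange_eq_top] using filKer_inf_filRange_le_filMonodromy N (c := 0) (sub_zero a)

theorem filMonodromy_mono : Monotone (filMonodromy N) := by
  intro a a' h
  refine iSup_le fun b ↦ iSup_le fun c ↦ iSup_le fun hbc ↦ ?_
  exact (inf_le_inf_right _ (filKer_mono N (by omega : b ≤ b + (a' - a)))).trans
    (filKer_inf_filRange_le_filMonodromy N (by omega))

theorem filMonodromy_eq_top_of_pow_eq_zero {k : ℕ} (hk : N ^ k = 0) {a : ℤ} (ha : k ≤ a) :
    filMonodromy N a = ⊤ :=
  top_unique <| (filKer_eq_top_of_pow_eq_zero N hk ha).ge.trans (filKer_le_filMonodromy N a)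

theorem filKer_inf_filRange_le_map_pow {b c : ℤ} (hc : 0 ≤ c) :
    filKer N b ⊓ filRange N c ≤ (filKer N (b + c)).map (N ^ c.toNat) := by
  rcases le_or_gt b (-1) with hb | hb
  · simp [filKer_eq_bot N hb]
  rintro _ ⟨hx, y, rfl⟩
  have hy : y ∈ LinearMap.ker (N ^ ((b + 1).toNat + c.toNat)) := by
    simpa [filKer, pow_add] using hx
  exact ⟨y, (LinearMap.iterateKer N).monotone (by omega) hy, rfl⟩

theorem map_pow_filMonodromy_le (k : ℕ) (a : ℤ) :
    (filMonodromy N a).map (N ^ k) ≤ filMonodromy N (a - 2 * k) := by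
  simp only [filMonodromy, Submodule.map_iSup, iSup_le_iff]
  rintro b c hbc _ ⟨x, ⟨hxb, hxc⟩, rfl⟩
  exact filKer_inf_filRange_le_filMonodromy N (by omega)
    ⟨pow_apply_mem_filKer N hxb k, pow_apply_mem_filRange N hxc k⟩

theorem filMonodromy_sub_two_mul_le_map_pow {k : ℕ} {a : ℤ} (ha : a ≤ k) :
    filMonodromy N (a - 2 * k) ≤ (filMonodromy N a).map (N ^ k) := by
  refine iSup_le fun b ↦ iSup_le fun c ↦ iSup_le fun hbc ↦ ?_
  rcases le_or_gt b (-1) with hb | hb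
  · simp [filKer_eq_bot N hb]
  intro x hx
  obtain ⟨y, hy, rfl⟩ := filKer_inf_filRange_le_map_pow N (by omega) hx
  refine ⟨(N ^ (c - k).toNat) y, filKer_inf_filRange_le_filMonodromy N (b := b + k) (c := c - k)
    (by omega) ⟨?_, ⟨y, rfl⟩⟩, ?_⟩
  · have h := pow_apply_mem_filKer N hy (c - k).toNat
    rwa [show b + c - ((c - k).toNat : ℤ) = b + k by omega] at h
  · rw [← Module.End.mul_apply, ← pow_add, show k + (c - k).toNat = c.toNat by omega]

end MonodromyFiltration

section CharacterizingProperties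

/- `hinj` and `hsurj` express that `N^a : W_a/W_{a-1} → W_{-a}/W_{-a-1}` is injective,
resp. surjective, without passing to quotients. -/

variable {R M : Type*} [CommRing R] [AddCommGroup M] [Module R M] {N : M →ₗ[R] M}
  {W : ℤ → Submodule R M}

theorem pow_apply_mem_sub_two_mul (hshift : ∀ a : ℤ, ∀ x ∈ W a, N x ∈ W (a - 2)) (k : ℕ)
    {a : ℤ} {x : M} (hx : x ∈ W a) : (N ^ k) x ∈ W (a - 2 * k) := by
  induction k with
  | zero => simpa using hx
  | succ k ih =>
    rw [pow_succ', Module.End.mul_apply]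
    convert hshift _ _ ih using 2
    push_cast
    ring

theorem filKer_le_of_gr_injective (htop : ∃ n : ℤ, ∀ a : ℤ, n ≤ a → W a = ⊤)
    (hinj : ∀ a : ℤ, 0 ≤ a → W a ⊓ (W (-a - 1)).comap (N ^ a.toNat) ≤ W (a - 1)) (b : ℤ) :
    filKer N b ≤ W b := by
  rcases le_or_gt b (-1) with hb | hb
  · simp [filKer_eq_bot N hb]
  obtain ⟨n, hn⟩ := htop
  intro x hx
  suffices ∀ m ≤ max n b, b ≤ m → x ∈ W m from this b (le_max_right _ _) le_rfl
  intro m hm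
  induction m, hm using Int.leInductionDown with
  | base => simp [hn _ (le_max_left _ _)]
  | pred m _ ih =>
    intro hbm
    have hxm : (N ^ m.toNat) x = 0 :=
      (LinearMap.iterateKer N).monotone (show (b + 1).toNat ≤ m.toNat by omega) hx
    exact hinj m (by omega) ⟨ih (by omega), by simp [hxm]⟩

theorem filMonodromy_le_of_gr_injective (hshift : ∀ a : ℤ, ∀ x ∈ W a, N x ∈ W (a - 2))
    (htop : ∃ n : ℤ, ∀ a : ℤ, n ≤ a → W a = ⊤)
    (hinj : ∀ a : ℤ, 0 ≤ a → W a ⊓ (W (-a - 1)).comap (N ^ a.toNat) ≤ W (a - 1)) (a : ℤ) :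
    filMonodromy N a ≤ W a := by
  refine iSup_le fun b ↦ iSup_le fun c ↦ iSup_le fun hbc ↦ ?_
  rcases le_or_gt c 0 with hc | hc
  · rw [filRange_eq_top N hc, inf_top_eq]
    exact (filKer_mono N (by omega)).trans (filKer_le_of_gr_injective htop hinj a)
  intro _ hx
  obtain ⟨y, hy, rfl⟩ := filKer_inf_filRange_le_map_pow N hc.le hx
  have h := pow_apply_mem_sub_two_mul hshift c.toNat (filKer_le_of_gr_injective htop hinj _ hy)
  rwa [show b + c - 2 * (c.toNat : ℤ) = a by omega] at h

theorem le_of_forall_map_pow_le (hbot : ∃ n : ℤ, ∀ a ≤ n, W a = ⊥)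
    (hsurj : ∀ a : ℤ, 0 ≤ a → W (-a) ≤ (W a).map (N ^ a.toNat) ⊔ W (-a - 1))
    {c : ℤ} (hc : 0 ≤ c) {G : Submodule R M} (hG : ∀ j, c ≤ j → (W j).map (N ^ j.toNat) ≤ G) :
    W (-c) ≤ G := by
  obtain ⟨n, hn⟩ := hbot
  have key : ∀ m ≤ -c, W (-c) ≤ G ⊔ W m := by
    intro m hm
    induction m, hm using Int.leInductionDown with
    | base => exact le_sup_right
    | pred m hm ih =>
      refine ih.trans (sup_le le_sup_left ?_)
      have h : W m ≤ (W (-m)).map (N ^ (-m).toNat) ⊔ W (m - 1) := by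
        simpa using hsurj (-m) (by omega)
      exact h.trans (sup_le_sup_right (hG (-m) (by omega)) _)
  simpa [hn _ (min_le_left n (-c))] using key (min n (-c)) (min_le_right _ _)

theorem neg_le_filMonodromy_of_gr_surjective (hbot : ∃ n : ℤ, ∀ a ≤ n, W a = ⊥)
    (hsurj : ∀ a : ℤ, 0 ≤ a → W (-a) ≤ (W a).map (N ^ a.toNat) ⊔ W (-a - 1))
    {c : ℤ} (hc : 0 ≤ c) (IH : ∀ j, c ≤ j → W j ≤ filMonodromy N j) :
    W (-c) ≤ filMonodromy N (-c) :=
  le_of_forall_map_pow_le hbot hsurj hc fun j hj ↦ (Submodule.map_mono (IH j hj)).trans <|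
    (map_pow_filMonodromy_le N _ _).trans <| filMonodromy_mono N (by omega)

theorem le_filMonodromy_of_forall_gt (hshift : ∀ a : ℤ, ∀ x ∈ W a, N x ∈ W (a - 2))
    (hbot : ∃ n : ℤ, ∀ a ≤ n, W a = ⊥)
    (hsurj : ∀ a : ℤ, 0 ≤ a → W (-a) ≤ (W a).map (N ^ a.toNat) ⊔ W (-a - 1))
    {a : ℤ} (IH : ∀ b, a < b → W b ≤ filMonodromy N b) : W a ≤ filMonodromy N a := by
  rcases lt_or_ge a 0 with ha | ha
  · simpa using neg_le_filMonodromy_of_gr_surjective hbot hsurj (c := -a) (by omega)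
      fun j hj ↦ IH j (by omega)
  intro x hx
  have hNx : (N ^ (a + 1).toNat) x ∈ (filMonodromy N a).map (N ^ (a + 1).toNat) := by
    have hdeg : a - 2 * ((a + 1).toNat : ℤ) = -(a + 2) := by omega
    have h := pow_apply_mem_sub_two_mul hshift (a + 1).toNat hx
    rw [hdeg] at h
    refine filMonodromy_sub_two_mul_le_map_pow N (by omega) ?_
    rw [hdeg]
    exact neg_le_filMonodromy_of_gr_surjective hbot hsurj (by omega)
      (fun j hj ↦ IH j (by omega)) h
  obtain ⟨w, hw, hNw⟩ := hNx
  have hxw : x - w ∈ filKer N a := by simp [filKer, hNw]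
  simpa using add_mem (filKer_le_filMonodromy N a hxw) hw

theorem le_filMonodromy_of_gr_surjective {k : ℕ} (hk : N ^ k = 0)
    (hshift : ∀ a : ℤ, ∀ x ∈ W a, N x ∈ W (a - 2)) (hbot : ∃ n : ℤ, ∀ a ≤ n, W a = ⊥)
    (hsurj : ∀ a : ℤ, 0 ≤ a → W (-a) ≤ (W a).map (N ^ a.toNat) ⊔ W (-a - 1)) (a : ℤ) :
    W a ≤ filMonodromy N a := by
  suffices ∀ m ≤ (k : ℤ), ∀ b, m ≤ b → W b ≤ filMonodromy N b from
    this (min a k) (min_le_right _ _) a (min_le_left _ _)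
  intro m hm
  induction m, hm using Int.leInductionDown with
  | base => exact fun b hb ↦ by simp [filMonodromy_eq_top_of_pow_eq_zero N hk hb]
  | pred m _ ih =>
    intro b hb
    rcases eq_or_lt_of_le hb with rfl | hb
    · exact le_filMonodromy_of_forall_gt hshift hbot hsurj fun c hc ↦ ih c (by omega)
    · exact ih b (by omega)

end CharacterizingProperties

/-- Uniqueness of the monodromy filtration: any exhaustive, separated, monotone filtration
`W` with `N(W_a) ⊆ W_{a−2}` such that for all `a ≥ 0` the map `W_a/W_{a−1} → W_{−a}/W_{−a−1}`
induced by `N^a` is an isomorphism, coincides with the monodromy filtration. -/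
theorem statement7 {R M : Type*} [CommRing R] [AddCommGroup M] [Module R M]
    (N : M →ₗ[R] M) (hN : IsNilpotent N)
    (W : ℤ → Submodule R M)
    (hbot : ∃ n : ℤ, ∀ a ≤ n, W a = ⊥)
    (htop : ∃ n : ℤ, ∀ a : ℤ, n ≤ a → W a = ⊤)
    (hshift : ∀ a : ℤ, ∀ x ∈ W a, N x ∈ W (a - 2))
    (hNa : ∀ a : ℤ, 0 ≤ a → ∀ x ∈ W a, (N ^ a.toNat) x ∈ W (-a))
    (hNa' : ∀ a : ℤ, 0 ≤ a → ∀ x ∈ W (a - 1), (N ^ a.toNat) x ∈ W (-a - 1))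
    (hiso : ∀ (a : ℤ) (ha : 0 ≤ a),
      Function.Bijective
        (Submodule.mapQ ((W (a - 1)).comap (W a).subtype)
          ((W (-a - 1)).comap (W (-a)).subtype)
          (LinearMap.restrict (N ^ a.toNat) (fun x hx => hNa a ha x hx))
          (by exact fun x hx => hNa' a ha x.1 hx))) :
    ∀ a : ℤ, W a = filMonodromy N a := by
  obtain ⟨k, hk⟩ := hN
  have hinj : ∀ a : ℤ, 0 ≤ a → W a ⊓ (W (-a - 1)).comap (N ^ a.toNat) ≤ W (a - 1) :=
    fun a ha ↦ Submodule.inf_comap_le_of_injective_mapQ_restrict (hiso a ha).injective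
  have hsurj : ∀ a : ℤ, 0 ≤ a → W (-a) ≤ (W a).map (N ^ a.toNat) ⊔ W (-a - 1) :=
    fun a ha ↦ Submodule.le_map_sup_of_surjective_mapQ_restrict (hiso a ha).surjective
  intro a
  exact le_antisymm (le_filMonodromy_of_gr_surjective hk hshift hbot hsurj a)
    (filMonodromy_le_of_gr_injective hshift htop hinj a)
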